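/- There is a one-to-one correspondence between strict pre-Lie-Rinehart 2-algebras over A and crossed modules for pre-Lie-Rinehart algebras over A: given a strict pre-Lie-Rinehart 2-algebra (P₀,P₁,m₁,m₂,m₃=0,θ), the product u·v := m₂(m₁(u),v) makes P₁ a pre-Lie algebra, m₁ is an A-linear pre-Lie morphism, (ρ,μ) given by ρ(X⁰)u = m₂(X⁰,u), μ(X⁰)u = m₂(u,X⁰) is a representation, and (P₀,P₁,m₁,(ρ,μ)) is a crossed module; conversely every crossed module arises this way. -/

import Mathlib

/-- A pre-Lie-Rinehart algebra structure over the commutative `K`-algebra `A`: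
an `A`-module `E` with a `K`-bilinear pre-Lie product `mul` and an `A`-linear
anchor `θ : E → Der(A)` satisfying the compatibility conditions. -/
def IsPreLieRinehart (K : Type*) {A E : Type*} [Field K] [CommRing A] [Algebra K A]
    [AddCommGroup E] [Module K E] [Module A E] [IsScalarTower K A E]
    (mul : E → E → E) (θ : E → Derivation K A A) : Prop :=
  (∀ X Y Z : E, mul (X + Y) Z = mul X Z + mul Y Z) ∧
  (∀ X Y Z : E, mul X (Y + Z) = mul X Y + mul X Z) ∧
  (∀ (k : K) (X Y : E), mul (k • X) Y = k • mul X Y) ∧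
  (∀ (k : K) (X Y : E), mul X (k • Y) = k • mul X Y) ∧
  (∀ X Y Z : E, mul X (mul Y Z) - mul (mul X Y) Z
      = mul Y (mul X Z) - mul (mul Y X) Z) ∧
  (∀ (a : A) (X Y : E), mul X (a • Y) = a • mul X Y + θ X a • Y) ∧
  (∀ (a : A) (X Y : E), mul (a • X) Y = a • mul X Y) ∧
  (∀ X Y : E, θ (X + Y) = θ X + θ Y) ∧
  (∀ (a : A) (X : E), θ (a • X) = a • θ X) ∧
  (∀ X Y : E, θ (mul X Y - mul Y X) = ⁅θ X, θ Y⁆)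

/-- A Lie-Rinehart algebra structure over the commutative `K`-algebra `A`:
an `A`-module `E` with a `K`-bilinear Lie bracket `br` and an `A`-linear anchor
`θ : E → Der(A)` satisfying the Leibniz and anchor conditions. -/
def IsLieRinehart (K : Type*) {A E : Type*} [Field K] [CommRing A] [Algebra K A]
    [AddCommGroup E] [Module K E] [Module A E] [IsScalarTower K A E]
    (br : E → E → E) (θ : E → Derivation K A A) : Prop :=
  (∀ X Y Z : E, br (X + Y) Z = br X Z + br Y Z) ∧
  (∀ X Y Z : E, br X (Y + Z) = br X Y + br X Z) ∧
  (∀ (k : K) (X Y : E), br (k • X) Y = k • br X Y) ∧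
  (∀ (k : K) (X Y : E), br X (k • Y) = k • br X Y) ∧
  (∀ X : E, br X X = 0) ∧
  (∀ X Y Z : E, br X (br Y Z) + br Y (br Z X) + br Z (br X Y) = 0) ∧
  (∀ (a : A) (X Y : E), br X (a • Y) = a • br X Y + θ X a • Y) ∧
  (∀ X Y : E, θ (X + Y) = θ X + θ Y) ∧
  (∀ (a : A) (X : E), θ (a • X) = a • θ X) ∧
  (∀ X Y : E, θ (br X Y) = ⁅θ X, θ Y⁆)

/-- A representation `(ρ, μ)` of the pre-Lie-Rinehart algebra `(E, mul, θ)` on the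
`A`-module `F`: `ρ` is a Lie-Rinehart representation of the sub-adjacent
Lie-Rinehart algebra `E^c` on `F`, `μ(X)` is `A`-linear with `μ` `A`-linear in `X`,
and `ρ(X)μ(Y) − μ(Y)ρ(X) = μ(X·Y) − μ(Y)μ(X)`. -/
def IsPLRRep (K : Type*) {A E F : Type*} [Field K] [CommRing A] [Algebra K A]
    [AddCommGroup E] [Module K E] [Module A E] [IsScalarTower K A E]
    [AddCommGroup F] [Module K F] [Module A F] [IsScalarTower K A F]
    (mul : E → E → E) (θ : E → Derivation K A A)
    (ρ μ : E → F → F) : Prop :=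
  (∀ (X Y : E) (u : F), ρ (X + Y) u = ρ X u + ρ Y u) ∧
  (∀ (X : E) (u v : F), ρ X (u + v) = ρ X u + ρ X v) ∧
  (∀ (a : A) (X : E) (u : F), ρ (a • X) u = a • ρ X u) ∧
  (∀ (a : A) (X : E) (u : F), ρ X (a • u) = a • ρ X u + θ X a • u) ∧
  (∀ (X Y : E) (u : F), ρ (mul X Y - mul Y X) u = ρ X (ρ Y u) - ρ Y (ρ X u)) ∧
  (∀ (X Y : E) (u : F), μ (X + Y) u = μ X u + μ Y u) ∧
  (∀ (X : E) (u v : F), μ X (u + v) = μ X u + μ X v) ∧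
  (∀ (a : A) (X : E) (u : F), μ (a • X) u = a • μ X u) ∧
  (∀ (a : A) (X : E) (u : F), μ X (a • u) = a • μ X u) ∧
  (∀ (X Y : E) (u : F), ρ X (μ Y u) - μ Y (ρ X u) = μ (mul X Y) u - μ Y (μ X u))

/-- A crossed module for pre-Lie-Rinehart algebras over `A`: a pre-Lie-Rinehart
algebra `(E, mulE, θ)`, a pre-Lie `K`-algebra `(F, mulF)` which is an `A`-module,
a representation `(ρ, μ)` of `E` on `F`, and an `A`-linear pre-Lie homomorphism
`par : F → E` such that `par(ρ(X)u) = X·par(u)`, `par(μ(X)u) = par(u)·X`,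
`ρ(par u)v = μ(par v)u = u·v`, and `θ ∘ par = 0`. -/
def IsPLRCrossedModule (K : Type*) {A E F : Type*} [Field K] [CommRing A]
    [Algebra K A]
    [AddCommGroup E] [Module K E] [Module A E] [IsScalarTower K A E]
    [AddCommGroup F] [Module K F] [Module A F] [IsScalarTower K A F]
    (mulE : E → E → E) (θ : E → Derivation K A A)
    (mulF : F → F → F) (par : F → E) (ρ μ : E → F → F) : Prop :=
  IsPreLieRinehart K mulE θ ∧
  -- (F, mulF) is a pre-Lie K-algebra
  (∀ u v w : F, mulF (u + v) w = mulF u w + mulF v w) ∧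
  (∀ u v w : F, mulF u (v + w) = mulF u v + mulF u w) ∧
  (∀ (k : K) (u v : F), mulF (k • u) v = k • mulF u v) ∧
  (∀ (k : K) (u v : F), mulF u (k • v) = k • mulF u v) ∧
  (∀ u v w : F, mulF u (mulF v w) - mulF (mulF u v) w
      = mulF v (mulF u w) - mulF (mulF v u) w) ∧
  -- (ρ, μ) is a representation of E on F
  IsPLRRep K mulE θ ρ μ ∧
  -- par is an A-linear pre-Lie algebra homomorphism
  (∀ u v : F, par (u + v) = par u + par v) ∧
  (∀ (a : A) (u : F), par (a • u) = a • par u) ∧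
  (∀ u v : F, par (mulF u v) = mulE (par u) (par v)) ∧
  -- crossed module axioms
  (∀ (X : E) (u : F), par (ρ X u) = mulE X (par u)) ∧
  (∀ (X : E) (u : F), par (μ X u) = mulE (par u) X) ∧
  (∀ u v : F, ρ (par u) v = mulF u v) ∧
  (∀ u v : F, μ (par v) u = mulF u v) ∧
  (∀ u : F, θ (par u) = 0)

/-- A pre-Lie-Rinehart 2-algebra over `A`: a 2-term complex `m1 : P1 → P0` of
`A`-modules, structure maps `m200 : P0×P0 → P0`, `m201 : P0×P1 → P1`,
`m210 : P1×P0 → P1` (the components of `m₂`), `m3 : P0×P0×P0 → P1` (skew in its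
first two arguments), and an `A`-linear anchor `θ : P0 → Der(A)`, satisfying the
pre-Lie 2-algebra axioms (a)-(f) together with the Rinehart compatibility
conditions (i)-(v). -/
def IsPreLieRinehart2 (K : Type*) {A P0 P1 : Type*} [Field K] [CommRing A]
    [Algebra K A]
    [AddCommGroup P0] [Module K P0] [Module A P0] [IsScalarTower K A P0]
    [AddCommGroup P1] [Module K P1] [Module A P1] [IsScalarTower K A P1]
    (m1 : P1 → P0) (m200 : P0 → P0 → P0) (m201 : P0 → P1 → P1)
    (m210 : P1 → P0 → P1) (m3 : P0 → P0 → P0 → P1)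
    (θ : P0 → Derivation K A A) : Prop :=
  -- m1 is A-linear
  (∀ u v : P1, m1 (u + v) = m1 u + m1 v) ∧
  (∀ (a : A) (u : P1), m1 (a • u) = a • m1 u) ∧
  -- biadditivity of the components of m₂
  (∀ X Y Z : P0, m200 (X + Y) Z = m200 X Z + m200 Y Z) ∧
  (∀ X Y Z : P0, m200 X (Y + Z) = m200 X Y + m200 X Z) ∧
  (∀ (X Y : P0) (u : P1), m201 (X + Y) u = m201 X u + m201 Y u) ∧
  (∀ (X : P0) (u v : P1), m201 X (u + v) = m201 X u + m201 X v) ∧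
  (∀ (u v : P1) (X : P0), m210 (u + v) X = m210 u X + m210 v X) ∧
  (∀ (u : P1) (X Y : P0), m210 u (X + Y) = m210 u X + m210 u Y) ∧
  -- Rinehart conditions (i) and (ii) for m₂
  (∀ (a : A) (X Y : P0), m200 X (a • Y) = a • m200 X Y + θ X a • Y) ∧
  (∀ (a : A) (X Y : P0), m200 (a • X) Y = a • m200 X Y) ∧
  (∀ (a : A) (X : P0) (u : P1), m201 X (a • u) = a • m201 X u + θ X a • u) ∧
  (∀ (a : A) (X : P0) (u : P1), m201 (a • X) u = a • m201 X u) ∧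
  (∀ (a : A) (u : P1) (X : P0), m210 u (a • X) = a • m210 u X) ∧
  (∀ (a : A) (u : P1) (X : P0), m210 (a • u) X = a • m210 u X) ∧
  -- m3 is A-trilinear and skew-symmetric in its first two arguments
  (∀ W X Y Z : P0, m3 (W + X) Y Z = m3 W Y Z + m3 X Y Z) ∧
  (∀ W X Y Z : P0, m3 W (X + Y) Z = m3 W X Z + m3 W Y Z) ∧
  (∀ W X Y Z : P0, m3 W X (Y + Z) = m3 W X Y + m3 W X Z) ∧
  (∀ (a : A) (X Y Z : P0), m3 (a • X) Y Z = a • m3 X Y Z) ∧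
  (∀ (a : A) (X Y Z : P0), m3 X (a • Y) Z = a • m3 X Y Z) ∧
  (∀ (a : A) (X Y Z : P0), m3 X Y (a • Z) = a • m3 X Y Z) ∧
  (∀ X Y Z : P0, m3 X Y Z = - m3 Y X Z) ∧
  -- axiom (a): m1 m2(x, m) = m2(x, m1 m)
  (∀ (X : P0) (u : P1), m1 (m201 X u) = m200 X (m1 u)) ∧
  -- axiom (b): m1 m2(m, x) = m2(m1 m, x)
  (∀ (u : P1) (X : P0), m1 (m210 u X) = m200 (m1 u) X) ∧
  -- axiom (c): m2(m1 m, n) = m2(m, m1 n)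
  (∀ u v : P1, m201 (m1 u) v = m210 u (m1 v)) ∧
  -- axiom (e₁)
  (∀ X Y Z : P0, m1 (m3 X Y Z)
      = m200 X (m200 Y Z) - m200 (m200 X Y) Z
        - m200 Y (m200 X Z) + m200 (m200 Y X) Z) ∧
  -- axiom (e₂)
  (∀ (X Y : P0) (u : P1), m3 X Y (m1 u)
      = m201 X (m201 Y u) - m201 (m200 X Y) u
        - m201 Y (m201 X u) + m201 (m200 Y X) u) ∧
  -- axiom (e₃)
  (∀ (u : P1) (X Y : P0), m3 (m1 u) X Y
      = m210 u (m200 X Y) - m210 (m210 u X) Y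
        - m201 X (m210 u Y) + m210 (m201 X u) Y) ∧
  -- axiom (f)
  (∀ W X Y Z : P0,
      m201 W (m3 X Y Z) - m201 X (m3 W Y Z) + m201 Y (m3 W X Z)
        + m210 (m3 X Y W) Z - m210 (m3 W Y X) Z + m210 (m3 W X Y) Z
        - m3 X Y (m200 W Z) + m3 W Y (m200 X Z) - m3 W X (m200 Y Z)
        - m3 (m200 W X - m200 X W) Y Z + m3 (m200 W Y - m200 Y W) X Z
        - m3 (m200 X Y - m200 Y X) W Z = 0) ∧
  -- the anchor θ is A-linear and satisfies (iv), (v)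
  (∀ X Y : P0, θ (X + Y) = θ X + θ Y) ∧
  (∀ (a : A) (X : P0), θ (a • X) = a • θ X) ∧
  (∀ X Y : P0, θ (m200 X Y - m200 Y X) = ⁅θ X, θ Y⁆) ∧
  (∀ u : P1, θ (m1 u) = 0)

/-!
With `m₃ = 0` the axioms of a pre-Lie-Rinehart 2-algebra translate one by one into those of a
crossed module: (e₁) becomes the pre-Lie identity on `P₀`, (e₂) and (e₃) the two identities of the
representation `(ρ, μ)`, (a) and (b) the equivariance of `∂ = m₁`, (c) the Peiffer identity
`μ(∂v)u = u·v`, and (f) holds trivially. The pre-Lie identity on `P₁` is (e₂) at `∂u, ∂v`, rewritten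
by (a). Scalars from `K` act through `algebraMap K A`, which every anchor `θ X` kills, so
`K`-linearity is inherited from `A`-linearity.
-/

section AddCommGroup

variable {M : Type*} [AddCommGroup M] {a b c d : M}

lemma zero_eq_sub_sub_add_iff_sub_eq_sub : (0 : M) = a - b - c + d ↔ a - b = c - d := by
  rw [show a - b - c + d = (a - b) - (c - d) by abel, eq_comm, sub_eq_zero]

lemma zero_eq_sub_sub_add_iff_sub_eq_sub' : (0 : M) = a - b - c + d ↔ b - d = a - c := by
  rw [show a - b - c + d = (a - c) - (b - d) by abel, eq_comm, sub_eq_zero, eq_comm]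

end AddCommGroup

section AddGroup

variable {M N : Type*} [AddGroup M] [AddGroup N] {f : M → N}

lemma map_zero_of_map_add (hf : ∀ x y, f (x + y) = f x + f y) : f 0 = 0 :=
  (AddMonoidHom.mk' f hf).map_zero

lemma map_sub_of_map_add (hf : ∀ x y, f (x + y) = f x + f y) (x y : M) :
    f (x - y) = f x - f y :=
  (AddMonoidHom.mk' f hf).map_sub x y

end AddGroup

section ScalarTower

variable {K A M N : Type*} [CommSemiring K] [CommSemiring A] [Algebra K A]
  [AddCommMonoid M] [Module K M] [Module A M] [IsScalarTower K A M]
  [AddCommMonoid N] [Module K N] [Module A N] [IsScalarTower K A N]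

lemma map_smul_of_map_smul_algebra {f : M → N} (hf : ∀ (a : A) x, f (a • x) = a • f x)
    (k : K) (x : M) : f (k • x) = k • f x := by
  rw [← algebraMap_smul A k x, hf, algebraMap_smul]

lemma map_smul_of_leibniz {f : M → M} (D : Derivation K A A)
    (hf : ∀ (a : A) x, f (a • x) = a • f x + D a • x) (k : K) (x : M) : f (k • x) = k • f x := by
  rw [← algebraMap_smul A k x, hf, D.map_algebraMap, zero_smul, add_zero, algebraMap_smul]

end ScalarTower

section Strict

variable {K A P0 P1 : Type*} [Field K] [CommRing A] [Algebra K A]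
  [AddCommGroup P0] [Module K P0] [Module A P0] [IsScalarTower K A P0]
  [AddCommGroup P1] [Module K P1] [Module A P1] [IsScalarTower K A P1]
  {m1 : P1 → P0} {m200 : P0 → P0 → P0} {m201 : P0 → P1 → P1} {m210 : P1 → P0 → P1}
  {θ : P0 → Derivation K A A}

theorem IsPreLieRinehart2.isPLRCrossedModule
    (h : IsPreLieRinehart2 K m1 m200 m201 m210 (fun _ _ _ => (0 : P1)) θ) :
    IsPLRCrossedModule K m200 θ (fun u v => m201 (m1 u) v) m1 m201 (fun X u => m210 u X) := by
  obtain ⟨m1_add, m1_smul, m200_add_left, m200_add_right, m201_add_left, m201_add_right,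
    m210_add_left, m210_add_right, m200_leibniz, m200_smul_left, m201_leibniz, m201_smul_left,
    m210_smul_right, m210_smul_left, -, -, -, -, -, -, -, m1_m201, m1_m210, m201_m1, e₁, e₂, e₃, -,
    θ_add, θ_smul, θ_bracket, θ_m1⟩ := h
  have m1_zero : m1 0 = 0 := map_zero_of_map_add m1_add
  have m201_sub_left (X Y : P0) (u : P1) : m201 (X - Y) u = m201 X u - m201 Y u :=
    map_sub_of_map_add (f := (m201 · u)) (m201_add_left · · u) X Y
  have m201_smul_right_K (k : K) (X : P0) (u : P1) : m201 X (k • u) = k • m201 X u :=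
    map_smul_of_leibniz (θ X) (m201_leibniz · X) k u
  have m201_smul_left_K (k : K) (X : P0) (u : P1) : m201 (k • X) u = k • m201 X u :=
    map_smul_of_map_smul_algebra (f := (m201 · u)) (m201_smul_left · · u) k X
  refine ⟨⟨m200_add_left, m200_add_right,
      fun k X Y => map_smul_of_map_smul_algebra (f := (m200 · Y)) (m200_smul_left · · Y) k X,
      fun k X Y => map_smul_of_leibniz (θ X) (m200_leibniz · X) k Y,
      fun X Y Z => zero_eq_sub_sub_add_iff_sub_eq_sub.1 (m1_zero ▸ e₁ X Y Z),
      m200_leibniz, m200_smul_left, θ_add, θ_smul, θ_bracket⟩,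
    fun u v w => by simp only [m1_add, m201_add_left],
    fun u => m201_add_right (m1 u),
    fun k u v => by simp only [map_smul_of_map_smul_algebra m1_smul, m201_smul_left_K],
    fun k u => m201_smul_right_K k (m1 u),
    fun u v w => by simp only [m1_m201]; exact zero_eq_sub_sub_add_iff_sub_eq_sub.1 (e₂ _ _ _),
    ⟨m201_add_left, m201_add_right, m201_smul_left, m201_leibniz,
      fun X Y u => by
        rw [m201_sub_left]; exact zero_eq_sub_sub_add_iff_sub_eq_sub'.1 (e₂ X Y u),
      fun X Y u => m210_add_right u X Y, fun X u v => m210_add_left u v X,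
      fun a X u => m210_smul_right a u X, fun a X u => m210_smul_left a u X,
      fun X Y u => (zero_eq_sub_sub_add_iff_sub_eq_sub.1 (e₃ u X Y)).symm⟩,
    m1_add, m1_smul, fun u => m1_m201 (m1 u), m1_m201, fun X u => m1_m210 u X, fun _ _ => rfl,
    fun u v => (m201_m1 u v).symm, θ_m1⟩

theorem IsPLRCrossedModule.isPreLieRinehart2
    (h : IsPLRCrossedModule K m200 θ (fun u v => m201 (m1 u) v) m1 m201
      (fun X u => m210 u X)) :
    IsPreLieRinehart2 K m1 m200 m201 m210 (fun _ _ _ => (0 : P1)) θ := by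
  obtain ⟨⟨m200_add_left, m200_add_right, -, -, preLie, m200_leibniz, m200_smul_left,
      θ_add, θ_smul, θ_bracket⟩, -, -, -, -, -,
    ⟨ρ_add_left, ρ_add_right, ρ_smul_left, ρ_leibniz, ρ_bracket,
      μ_add_left, μ_add_right, μ_smul_left, μ_smul_right, ρ_μ_comm⟩,
    m1_add, m1_smul, -, m1_ρ, m1_μ, -, μ_m1, θ_m1⟩ := h
  have ρ_zero (X : P0) : m201 X 0 = 0 := map_zero_of_map_add (ρ_add_right X)
  have μ_zero (X : P0) : m210 0 X = 0 := map_zero_of_map_add (f := (m210 · X)) (μ_add_right X)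
  exact ⟨m1_add, m1_smul, m200_add_left, m200_add_right, ρ_add_left, ρ_add_right,
    fun u v X => μ_add_right X u v, fun u X Y => μ_add_left X Y u, m200_leibniz,
    m200_smul_left, ρ_leibniz, ρ_smul_left, fun a u X => μ_smul_left a X u,
    fun a u X => μ_smul_right a X u,
    fun _ _ _ _ => (add_zero 0).symm, fun _ _ _ _ => (add_zero 0).symm,
    fun _ _ _ _ => (add_zero 0).symm, fun a _ _ _ => (smul_zero a).symm,
    fun a _ _ _ => (smul_zero a).symm, fun a _ _ _ => (smul_zero a).symm,
    fun _ _ _ => neg_zero.symm, m1_ρ, fun u X => m1_μ X u, fun u v => (μ_m1 u v).symm,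
    fun X Y Z => (map_zero_of_map_add m1_add).trans
      (zero_eq_sub_sub_add_iff_sub_eq_sub.2 (preLie X Y Z)),
    fun X Y u => zero_eq_sub_sub_add_iff_sub_eq_sub'.2
      ((map_sub_of_map_add (f := (m201 · u)) (ρ_add_left · · u) _ _).symm.trans
        (ρ_bracket X Y u)),
    fun u X Y => zero_eq_sub_sub_add_iff_sub_eq_sub.2 (ρ_μ_comm X Y u).symm,
    fun W X Y Z => by simp [ρ_zero, μ_zero],
    θ_add, θ_smul, θ_bracket, θ_m1⟩

end Strict

/-- the one-to-one correspondence between strict pre-Lie-Rinehart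
2-algebras over `A` and crossed modules for pre-Lie-Rinehart algebras over `A`:
the data `(m1, m200, m201, m210, θ)` is a strict pre-Lie-Rinehart 2-algebra
(`m3 = 0`) if and only if `(P0, P1, ∂ = m1, (ρ, μ))` is a crossed module for
pre-Lie-Rinehart algebras, where the pre-Lie product on `P1` is
`u·v = m2(m1 u, v)`, `ρ(X)u = m2(X,u)` and `μ(X)u = m2(u,X)`. -/
theorem strictPreLieRinehart2_iff_crossedModule {K A P0 P1 : Type*} [Field K]
    [CommRing A] [Algebra K A]
    [AddCommGroup P0] [Module K P0] [Module A P0] [IsScalarTower K A P0]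
    [AddCommGroup P1] [Module K P1] [Module A P1] [IsScalarTower K A P1]
    (m1 : P1 → P0) (m200 : P0 → P0 → P0) (m201 : P0 → P1 → P1)
    (m210 : P1 → P0 → P1) (θ : P0 → Derivation K A A) :
    IsPreLieRinehart2 K m1 m200 m201 m210 (fun _ _ _ => (0 : P1)) θ
    ↔ IsPLRCrossedModule K m200 θ
        (fun u v => m201 (m1 u) v) m1 m201 (fun X u => m210 u X) :=
  ⟨IsPreLieRinehart2.isPLRCrossedModule, IsPLRCrossedModule.isPreLieRinehart2⟩
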